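/- Let P = (P_i, π_i) be an inverse sequence of compact metric spaces, and for each i let Q_i be an upper semicontinuous partition of P_i such that: (p1) for each i and each Q ∈ Q_{i+1} there is Q' ∈ Q_i with π_i(Q) ⊆ Q'; and (p2) for any sequence (Q_i)_{i≥k} with Q_i ∈ Q_i and π_i(Q_{i+1}) ⊆ Q_i for all i ≥ k, the diameters of the images π_{i,k}(Q_i) converge to 0. Then the induced inverse sequence of quotient spaces P* = (P_i/Q_i, π*_i) is well-defined with continuous bonding maps, and lim← P* is homeomorphic to lim← P. -/

import Mathlib

/-!
The classes of `Q_i` are closed and the quotient maps are closed, so the quotients are Hausdorff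
and the inverse limit of `P` maps continuously onto that of `P*` by `x ↦ ([x_i])_i`. This map is
a bijection between compact Hausdorff spaces, hence a homeomorphism. It is onto because a thread
of classes is a thread of nonempty compacta, whose inverse limit is nonempty. It is one-to-one
because if `x_i` and `y_i` lie in the same class for all `i`, then `x_k = π_{k+d,k}(x_{k+d})` and
`y_k = π_{k+d,k}(y_{k+d})` both lie in the image of one class of `Q_{k+d}`, whose diameter tends
to `0` by (p2).
-/

open Set Function

/-- The composition `π_{k+d,k} = π_k ∘ ⋯ ∘ π_{k+d-1}` of the bonding maps of an
inverse sequence. -/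
def bondAux {P : ℕ → Type} (π : ∀ n, P (n+1) → P n) (k : ℕ) : ∀ d : ℕ, P (k + d) → P k
  | 0 => id
  | d+1 => fun x => bondAux π k d (π (k + d) x)

theorem NormalSpace.of_continuous_isClosedMap_surjective {X Y : Type*} [TopologicalSpace X]
    [TopologicalSpace Y] [NormalSpace X] {f : X → Y} (hc : Continuous f) (hf : IsClosedMap f)
    (hs : Surjective f) : NormalSpace Y where
  normal s t hs' ht' hst := by
    obtain ⟨U, V, hU, hV, hsU, htV, hUV⟩ :=
      normal_separation (hs'.preimage hc) (ht'.preimage hc) (hst.preimage f)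
    have hsub : ∀ {A : Set Y} {W : Set X}, f ⁻¹' A ⊆ W → A ⊆ (f '' Wᶜ)ᶜ := by
      rintro A W hAW y hy ⟨z, hzW, rfl⟩
      exact hzW (hAW hy)
    refine ⟨_, _, (hf _ hU.isClosed_compl).isOpen_compl, (hf _ hV.isClosed_compl).isOpen_compl,
      hsub hsU, hsub htV, disjoint_left.mpr ?_⟩
    intro y hyU hyV
    obtain ⟨z, rfl⟩ := hs y
    exact disjoint_left.mp hUV (not_not.mp fun h => hyU ⟨z, h, rfl⟩)
      (not_not.mp fun h => hyV ⟨z, h, rfl⟩)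

namespace Quot

variable {X : Type*} {r : X → X → Prop}

theorem mk_eq_mk_iff (hr : Equivalence r) {a b : X} : Quot.mk r a = Quot.mk r b ↔ r a b :=
  Quot.eq.trans hr.eqvGen_iff

variable [TopologicalSpace X]

theorem t1Space_of_isClosed_classes (hr : Equivalence r) (hcl : ∀ x, IsClosed {y | r x y})
    (hmk : IsClosedMap (Quot.mk r)) : T1Space (Quot r) where
  t1 q := by
    obtain ⟨x, rfl⟩ := Quot.exists_rep q
    convert hmk _ (hcl x)
    ext q
    obtain ⟨y, rfl⟩ := Quot.exists_rep q
    simp only [mem_singleton_iff, mem_image, mem_ofPred_eq, mk_eq_mk_iff hr]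
    exact ⟨fun h => ⟨y, hr.symm h, hr.refl y⟩,
      fun ⟨z, hxz, hzy⟩ => hr.symm (hr.trans hxz hzy)⟩

theorem t2Space_of_isClosedMap [NormalSpace X] (hr : Equivalence r)
    (hcl : ∀ x, IsClosed {y | r x y}) (hmk : IsClosedMap (Quot.mk r)) : T2Space (Quot r) :=
  have := t1Space_of_isClosed_classes hr hcl hmk
  have := NormalSpace.of_continuous_isClosedMap_surjective continuous_quot_mk hmk
    Quot.exists_rep
  inferInstance

end Quot

section InverseSequence

variable {P : ℕ → Type} {π : ∀ i, P (i+1) → P i}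

theorem bondAux_of_thread {x : ∀ i, P i} (hx : ∀ i, π i (x (i+1)) = x i) (k : ℕ) :
    ∀ d, bondAux π k d (x (k + d)) = x k
  | 0 => rfl
  | d+1 => by
      change bondAux π k d (π (k + d) (x (k + d + 1))) = x k
      rw [hx (k + d), bondAux_of_thread hx k d]

variable [∀ i, TopologicalSpace (P i)] [∀ i, T2Space (P i)]

theorem isClosed_setOf_forall_mem_thread (hπ : ∀ i, Continuous (π i)) (s : Set ℕ) :
    IsClosed {x : ∀ i, P i | ∀ i ∈ s, π i (x (i+1)) = x i} := by
  simp only [ofPred_forall]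
  exact isClosed_biInter fun i _ =>
    isClosed_eq ((hπ i).comp (continuous_apply _)) (continuous_apply _)

variable [∀ i, CompactSpace (P i)]

theorem compactSpace_threads (hπ : ∀ i, Continuous (π i)) :
    CompactSpace {x : ∀ i, P i // ∀ i, π i (x (i+1)) = x i} := by
  have hclosed : IsClosed {x : ∀ i, P i | ∀ i, π i (x (i+1)) = x i} := by
    simpa using isClosed_setOf_forall_mem_thread hπ univ
  exact isCompact_iff_compactSpace.mp hclosed.isCompact

theorem exists_thread_forall_mem (hπ : ∀ i, Continuous (π i)) {C : ∀ i, Set (P i)}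
    (hC : ∀ i, IsClosed (C i)) (hne : ∀ i, (C i).Nonempty)
    (hmaps : ∀ i, MapsTo (π i) (C (i+1)) (C i)) :
    ∃ x : ∀ i, P i, (∀ i, π i (x (i+1)) = x i) ∧ ∀ i, x i ∈ C i := by
  let T : ℕ → Set (∀ i, P i) := fun n =>
    {x | ∀ i ∈ Iio n, π i (x (i+1)) = x i} ∩ univ.pi C
  have hTclosed : ∀ n, IsClosed (T n) := fun n =>
    (isClosed_setOf_forall_mem_thread hπ _).inter (isClosed_set_pi fun i _ => hC i)
  have hTanti : ∀ n, T (n+1) ⊆ T n := fun n x hx =>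
    ⟨fun i hi => hx.1 i (Nat.lt_succ_of_lt hi), hx.2⟩
  -- Pushing a point of `∏ C i` down `n - i` steps in each coordinate gives a point of `T n`.
  let F : (∀ i, P i) → ∀ i, P i := fun z i => π i (z (i+1))
  have hF : MapsTo F (univ.pi C) (univ.pi C) := fun z hz i _ => hmaps i (hz (i+1) trivial)
  choose c hc using hne
  have hTne : ∀ n, (T n).Nonempty := fun n => by
    refine ⟨fun i => (F^[n - i] c) i, fun i hi => ?_,
      fun i _ => hF.iterate (n - i) (fun j _ => hc j) i trivial⟩
    change F (F^[n - (i+1)] c) i = F^[n - i] c i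
    rw [← iterate_succ_apply' F, show (n - (i+1)).succ = n - i by simp at hi; omega]
  obtain ⟨x, hx⟩ := IsCompact.nonempty_iInter_of_sequence_nonempty_isCompact_isClosed T hTanti
    hTne (hTclosed 0).isCompact hTclosed
  rw [mem_iInter] at hx
  exact ⟨x, fun i => (hx (i+1)).1 i (Nat.lt_succ_self i), fun i => (hx 0).2 i trivial⟩

end InverseSequence

theorem eq_of_forall_related_of_diam_image_lt {P : ℕ → Type} [∀ i, MetricSpace (P i)]
    [∀ i, CompactSpace (P i)] {π : ∀ i, P (i+1) → P i} {S : ∀ i, P i → P i → Prop}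
    (hS : ∀ i a, S i a a) {x y : ∀ i, P i} (hx : ∀ i, π i (x (i+1)) = x i)
    (hy : ∀ i, π i (y (i+1)) = y i) (hxy : ∀ i, S i (x i) (y i)) (k : ℕ)
    (hfine : ∀ ε > 0, ∃ N, Metric.diam (bondAux π k N '' {z | S (k+N) (x (k+N)) z}) < ε) :
    x k = y k := by
  refine eq_of_forall_dist_le fun ε hε => ?_
  obtain ⟨N, hN⟩ := hfine ε hε
  have hmem : ∀ z : ∀ i, P i, (∀ i, π i (z (i+1)) = z i) → S (k+N) (x (k+N)) (z (k+N)) →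
      z k ∈ bondAux π k N '' {w | S (k+N) (x (k+N)) w} :=
    fun z hz hxz => ⟨z (k+N), hxz, bondAux_of_thread hz k N⟩
  exact (Metric.dist_le_diam_of_mem Metric.isBounded_of_compactSpace (hmem x hx (hS _ _))
    (hmem y hy (hxy _))).trans hN.le

section QuotThreadMap

variable {P : ℕ → Type} {π : ∀ i, P (i+1) → P i} {S : ∀ i, P i → P i → Prop}
  (h1 : ∀ i x y, S (i+1) x y → S i (π i x) (π i y))

def quotThreadMap :
    {x : ∀ i, P i // ∀ i, π i (x (i+1)) = x i} →
      {y : ∀ i, Quot (S i) // ∀ i, Quot.map (π i) (h1 i) (y (i+1)) = y i} :=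
  fun x => ⟨fun i => Quot.mk _ (x.1 i), fun i => congrArg (Quot.mk _) (x.2 i)⟩

theorem continuous_quotThreadMap [∀ i, TopologicalSpace (P i)] :
    Continuous (quotThreadMap h1) :=
  Continuous.subtype_mk (continuous_pi fun i =>
    continuous_quot_mk.comp ((continuous_apply i).comp continuous_subtype_val)) _

theorem quotThreadMap_surjective [∀ i, TopologicalSpace (P i)] [∀ i, T2Space (P i)]
    [∀ i, CompactSpace (P i)] (hπ : ∀ i, Continuous (π i)) (hEq : ∀ i, Equivalence (S i))
    (hcl : ∀ i (x : P i), IsClosed {y | S i x y}) : Surjective (quotThreadMap h1) := by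
  rintro ⟨y, hy⟩
  choose q hq using fun i => Quot.exists_rep (y i)
  have hq_compat : ∀ i, S i (q i) (π i (q (i+1))) := fun i => by
    have := hy i
    rw [← hq (i+1), ← hq i] at this
    exact (hEq i).symm ((Quot.mk_eq_mk_iff (hEq i)).mp this)
  obtain ⟨x, hx, hxq⟩ := exists_thread_forall_mem hπ (C := fun i => {z | S i (q i) z})
    (hcl · _) (fun i => ⟨q i, (hEq i).refl _⟩)
    fun i z hz => (hEq i).trans (hq_compat i) (h1 i _ _ hz)
  refine ⟨⟨x, hx⟩, Subtype.ext (funext fun i => ?_)⟩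
  change Quot.mk _ (x i) = y i
  rw [← hq i]
  exact (Quot.mk_eq_mk_iff (hEq i)).mpr ((hEq i).symm (hxq i))

end QuotThreadMap

theorem stmt7 (P : ℕ → Type) [∀ i, MetricSpace (P i)] [∀ i, CompactSpace (P i)]
    (π : ∀ i, P (i+1) → P i) (hπ : ∀ i, Continuous (π i))
    (S : ∀ i, P i → P i → Prop) (hEq : ∀ i, Equivalence (S i))
    (hcl : ∀ i (x : P i), IsClosed {y | S i x y})
    (husc : ∀ i, IsClosedMap (Quot.mk (S i)))
    (h1 : ∀ i x y, S (i+1) x y → S i (π i x) (π i y))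
    (h2 : ∀ (k : ℕ) (x : ∀ i, P i),
      (∀ d : ℕ, S (k+d) (π (k+d) (x (k+d+1))) (x (k+d))) →
      ∀ ε > 0, ∃ N, ∀ d ≥ N,
        Metric.diam (bondAux π k d '' {y | S (k+d) (x (k+d)) y}) < ε) :
    ∃ π' : ∀ i, Quot (S (i+1)) → Quot (S i),
      (∀ i, Continuous (π' i)) ∧
      (∀ i x, π' i (Quot.mk (S (i+1)) x) = Quot.mk (S i) (π i x)) ∧
      Nonempty ({x : ∀ i, P i // ∀ i, π i (x (i+1)) = x i} ≃ₜ
                {y : ∀ i, Quot (S i) // ∀ i, π' i (y (i+1)) = y i}) := by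
  refine ⟨fun i => Quot.map (π i) (h1 i), fun i => continuous_quot_map (h1 i) (hπ i),
    fun _ _ => rfl, ?_⟩
  have := fun i => Quot.t2Space_of_isClosedMap (hEq i) (hcl i) (husc i)
  have := compactSpace_threads hπ
  have hinj : Injective (quotThreadMap h1) := fun x y hxy =>
    Subtype.ext <| funext fun k => eq_of_forall_related_of_diam_image_lt (fun i => (hEq i).refl)
      x.2 y.2 (fun i => (Quot.mk_eq_mk_iff (hEq i)).mp (congrFun (congrArg Subtype.val hxy) i)) k
      fun ε hε => (h2 k x.1 (fun d => x.2 (k + d) ▸ (hEq _).refl _) ε hε).imp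
        fun N hN => hN N le_rfl
  exact ⟨(continuous_quotThreadMap h1).homeoOfEquivCompactToT2
    (f := .ofBijective _ ⟨hinj, quotThreadMap_surjective h1 hπ hEq hcl⟩)⟩
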